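/- Let d ≥ 2 and m ≥ 2 be integers and g ≥ 0, L ≥ 0 real numbers. For the MBSP instance given by the zipper DAG Z(d,m) with P = 2 processors and cache capacity r = d+2, there exists a valid schedule whose synchronous cost is at most m + (2m + 2d)·g + (m+1)·L. -/

import Mathlib

namespace MBSP

/-- A transition (pebbling move) of a single processor. -/
inductive Op (ν : Type) where
  | load : ν → Op ν
  | save : ν → Op ν
  | compute : ν → Op ν
  | delete : ν → Op ν
deriving DecidableEq

/-- An MBSP instance: a DAG with compute weights `ω`, memory weights `μ`,
`P` processors, cache capacity `r`, communication cost `g` and synchronization cost `L`. -/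
structure Inst (ν : Type) where
  edge : ν → ν → Prop
  ω : ν → ℝ
  μ : ν → ℝ
  P : ℕ
  r : ℝ
  g : ℝ
  L : ℝ

variable {ν : Type} [DecidableEq ν]

def isSource (I : Inst ν) (v : ν) : Prop := ¬ ∃ u, I.edge u v

def isSink (I : Inst ν) (v : ν) : Prop := ¬ ∃ u, I.edge v u

def Acyclic (I : Inst ν) : Prop := ∀ v, ¬ Relation.TransGen I.edge v v

def opCost (I : Inst ν) : Op ν → ℝ
  | .load v => I.μ v * I.g
  | .save v => I.μ v * I.g
  | .compute v => I.ω v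
  | .delete _ => 0

def applyOp (R B : Finset ν) : Op ν → Finset ν × Finset ν
  | .load v => (insert v R, B)
  | .save v => (R, insert v B)
  | .compute v => (insert v R, B)
  | .delete v => (R.erase v, B)

def opOK (I : Inst ν) (R B : Finset ν) : Op ν → Prop
  | .load v => v ∈ B
  | .save v => v ∈ R
  | .compute v => (∃ u, I.edge u v) ∧ ∀ u, I.edge u v → u ∈ R
  | .delete _ => True

/-- The memory bound for a cache content `R`. -/
def memOK (I : Inst ν) (R : Finset ν) : Prop := ∑ v ∈ R, I.μ v ≤ I.r

/-- Run a sequence of transitions of one processor on a pair (cache, slow memory). -/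
def run (R B : Finset ν) : List (Op ν) → Finset ν × Finset ν
  | [] => (R, B)
  | op :: rest => run (applyOp R B op).1 (applyOp R B op).2 rest

/-- Validity of a sequence of transitions of one processor: every precondition holds
when the transition is applied and the memory bound holds throughout. -/
def seqValid (I : Inst ν) (R B : Finset ν) : List (Op ν) → Prop
  | [] => True
  | op :: rest => opOK I R B op ∧ memOK I (applyOp R B op).1 ∧
      seqValid I (applyOp R B op).1 (applyOp R B op).2 rest

/-- A superstep: for every processor, a compute phase (computes and deletes),
then a save phase, a delete phase and a load phase. -/
structure Superstep (ν : Type) (P : ℕ) where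
  comp : Fin P → List (Op ν)
  save : Fin P → List ν
  del : Fin P → List ν
  load : Fin P → List ν

structure Config (ν : Type) (P : ℕ) where
  R : Fin P → Finset ν
  B : Finset ν

abbrev Schedule (ν : Type) (P : ℕ) := List (Superstep ν P)

variable {P : ℕ}

def compOnly (l : List (Op ν)) : Prop :=
  ∀ op ∈ l, (∃ v, op = Op.compute v) ∨ (∃ v, op = Op.delete v)

def afterComp (c : Config ν P) (S : Superstep ν P) (p : Fin P) : Finset ν :=
  (run (c.R p) c.B (S.comp p)).1

/-- The shared slow memory after the save phases of all processors. -/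
def newB (c : Config ν P) (S : Superstep ν P) : Finset ν :=
  c.B ∪ Finset.univ.biUnion (fun p => (S.save p).toFinset)

def afterDel (c : Config ν P) (S : Superstep ν P) (p : Fin P) : Finset ν :=
  (S.del p).foldl Finset.erase (afterComp c S p)

def afterLoad (c : Config ν P) (S : Superstep ν P) (p : Fin P) : Finset ν :=
  afterDel c S p ∪ (S.load p).toFinset

/-- The configuration reached after executing a superstep. -/
def stepConfig (c : Config ν P) (S : Superstep ν P) : Config ν P :=
  ⟨fun p => afterLoad c S p, newB c S⟩

/-- Validity of a superstep at a configuration. -/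
def ssValid (I : Inst ν) (c : Config ν I.P) (S : Superstep ν I.P) : Prop :=
  (∀ p, compOnly (S.comp p)) ∧
  (∀ p, seqValid I (c.R p) c.B (S.comp p)) ∧
  (∀ p, ∀ v ∈ S.save p, v ∈ afterComp c S p) ∧
  (∀ p, ∀ v ∈ S.load p, v ∈ newB c S) ∧
  (∀ p, memOK I (afterLoad c S p))

def runSched (c : Config ν P) : Schedule ν P → Config ν P
  | [] => c
  | S :: rest => runSched (stepConfig c S) rest

def schedValidFrom (I : Inst ν) (c : Config ν I.P) : Schedule ν I.P → Prop
  | [] => True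
  | S :: rest => ssValid I c S ∧ schedValidFrom I (stepConfig c S) rest

/-- `B` is exactly the set of sources of the DAG. -/
def initB (I : Inst ν) (B : Finset ν) : Prop := ∀ v, v ∈ B ↔ isSource I v

/-- A valid MBSP schedule: starts with empty caches and the sources in slow memory,
every transition is legal and the memory bound holds throughout, and at the end
every sink is in slow memory. -/
def Valid (I : Inst ν) (sched : Schedule ν I.P) : Prop :=
  ∃ B0 : Finset ν, initB I B0 ∧
    schedValidFrom I ⟨fun _ => ∅, B0⟩ sched ∧
    ∀ v, isSink I v → v ∈ (runSched (⟨fun _ => ∅, B0⟩ : Config ν I.P) sched).B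

def listCost (I : Inst ν) (l : List (Op ν)) : ℝ := (l.map (opCost I)).sum

def ioCost (I : Inst ν) (l : List ν) : ℝ := (l.map (fun v => I.μ v * I.g)).sum

/-- The synchronous cost of a superstep. -/
noncomputable def ssCost (I : Inst ν) (S : Superstep ν I.P) : ℝ :=
  (⨆ p : Fin I.P, listCost I (S.comp p)) + (⨆ p : Fin I.P, ioCost I (S.save p)) +
    (⨆ p : Fin I.P, ioCost I (S.load p)) + I.L

/-- The synchronous cost of a schedule. -/
noncomputable def syncCost (I : Inst ν) (sched : Schedule ν I.P) : ℝ :=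
  (sched.map (ssCost I)).sum

/-- Finishing times of the saves in a save phase starting at time `t`. -/
def saveFinishes (I : Inst ν) : ℝ → List ν → List (ν × ℝ)
  | _, [] => []
  | t, v :: rest => (v, t + I.μ v * I.g) :: saveFinishes I (t + I.μ v * I.g) rest

def minSaveTime (entries : List (ν × ℝ)) (v : ν) : Option ℝ :=
  ((entries.filter (fun e => e.1 == v)).map Prod.snd).min?

/-- Finishing time of a load phase: each load waits for the value to be available
in slow memory (time `Γ v`). -/
def loadFold (I : Inst ν) (Γ : ν → Option ℝ) : ℝ → List ν → ℝ
  | t, [] => t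
  | t, v :: rest => loadFold I Γ (max t ((Γ v).getD 0) + I.μ v * I.g) rest

/-- One superstep of the asynchronous execution: updates the finishing time of
every processor and the availability times `Γ` of the values in slow memory. -/
def asyncSS (I : Inst ν) (S : Superstep ν I.P)
    (st : (Fin I.P → ℝ) × (ν → Option ℝ)) : (Fin I.P → ℝ) × (ν → Option ℝ) :=
  let t1 : Fin I.P → ℝ := fun p => st.1 p + listCost I (S.comp p)
  let entries : List (ν × ℝ) :=
    ((List.finRange I.P).map (fun p => saveFinishes I (t1 p) (S.save p))).flatten
  let Γ' : ν → Option ℝ := fun v => (st.2 v).orElse (fun _ => minSaveTime entries v)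
  let t2 : Fin I.P → ℝ := fun p => t1 p + ioCost I (S.save p)
  (fun p => loadFold I Γ' (t2 p) (S.load p), Γ')

def asyncRun (I : Inst ν) (st : (Fin I.P → ℝ) × (ν → Option ℝ)) :
    Schedule ν I.P → (Fin I.P → ℝ) × (ν → Option ℝ)
  | [] => st
  | S :: rest => asyncRun I (asyncSS I S st) rest

/-- The asynchronous cost (makespan) of a schedule. -/
noncomputable def asyncCost (I : Inst ν) (sched : Schedule ν I.P) : ℝ :=
  ⨆ p : Fin I.P, (asyncRun I (fun _ => (0 : ℝ), fun _ => none) sched).1 p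

end MBSP

namespace MBSP

/-- Nodes of the zipper DAG `Z(d,m)`: two groups `H₁`, `H₂` of `d` source nodes
each, and two chains `v_1,…,v_m` and `u_1,…,u_m` (index `i ∈ [m]` is `Fin`-value `i-1`). -/
inductive ZNode (d m : ℕ) where
  | h1 : Fin d → ZNode d m
  | h2 : Fin d → ZNode d m
  | v : Fin m → ZNode d m
  | u : Fin m → ZNode d m
deriving DecidableEq, Fintype

/-- Edges of the zipper DAG `Z(d,m)`. -/
def zEdge (d m : ℕ) : ZNode d m → ZNode d m → Prop
  | .v i, .v j => (j : ℕ) = (i : ℕ) + 1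
  | .u i, .u j => (j : ℕ) = (i : ℕ) + 1
  | .h1 _, .u i => Odd ((i : ℕ) + 1)
  | .h1 _, .v i => Even ((i : ℕ) + 1)
  | .h2 _, .v i => Odd ((i : ℕ) + 1)
  | .h2 _, .u i => Even ((i : ℕ) + 1)
  | _, _ => False

/-- The MBSP instance on the zipper DAG `Z(d,m)` with `P = 2` processors, cache
capacity `r`, communication cost `g` and synchronization cost `L`; all compute and
memory weights are `1`. -/
def zipper (d m : ℕ) (r g L : ℝ) : Inst (ZNode d m) where
  edge := zEdge d m
  ω := fun _ => 1
  μ := fun _ => 1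
  P := 2
  r := r
  g := g
  L := L

end MBSP

/-!
Processor `p` keeps the `d` sources of one group in its cache throughout. In superstep `k` it
computes the level-`k` chain node fed by its own group; the only other parent is the level-`(k-1)`
node computed by the partner, which `p` loaded at the end of the previous superstep. It then saves
that node, discards everything but its sources and loads the partner's level-`k` node, so the
cache never exceeds `d + 2`. After an initial superstep of cost `d·g + L` loading the sources, each
of the `m` levels costs `1 + 2g + L`.
-/

namespace MBSP

open Finset

section Generic

variable {ν : Type} [DecidableEq ν] {P : ℕ}

theorem foldl_erase_eq_sdiff (l : List ν) (s : Finset ν) :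
    l.foldl Finset.erase s = s \ l.toFinset := by
  induction l generalizing s with
  | nil => simp
  | cons a l ih =>
    rw [List.foldl_cons, ih, Finset.erase_eq, sdiff_sdiff_left, List.toFinset_cons,
      Finset.insert_eq]
    rfl

theorem afterDel_eq_sdiff (c : Config ν P) (S : Superstep ν P) (p : Fin P) :
    afterDel c S p = afterComp c S p \ (S.del p).toFinset :=
  foldl_erase_eq_sdiff _ _

theorem mem_newB_of_mem_save {c : Config ν P} {S : Superstep ν P} {p : Fin P} {v : ν}
    (hv : v ∈ S.save p) : v ∈ newB c S :=
  mem_union_right _ (mem_biUnion.mpr ⟨p, mem_univ p, List.mem_toFinset.mpr hv⟩)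

theorem B_subset_runSched_B (c : Config ν P) (sched : Schedule ν P) :
    c.B ⊆ (runSched c sched).B := by
  induction sched generalizing c with
  | nil => exact subset_rfl
  | cons S rest ih => exact subset_union_left.trans (ih (stepConfig c S))

theorem mem_runSched_B_of_mem_save {c : Config ν P} {sched : Schedule ν P}
    {S : Superstep ν P} {p : Fin P} {v : ν} (hS : S ∈ sched) (hv : v ∈ S.save p) :
    v ∈ (runSched c sched).B := by
  induction sched generalizing c with
  | nil => simp at hS
  | cons S' rest ih =>
    rcases List.mem_cons.mp hS with rfl | hS
    · exact B_subset_runSched_B _ rest (mem_newB_of_mem_save hv)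
    · exact ih hS

variable {I : Inst ν}

theorem schedValidFrom_map_finRange {n : ℕ} (f : Fin n → Superstep ν I.P)
    (Inv : ℕ → Config ν I.P → Prop)
    (hstep : ∀ (k : Fin n) c, Inv k c → ssValid I c (f k) ∧ Inv (k + 1) (stepConfig c (f k)))
    (c : Config ν I.P) (hc : Inv 0 c) :
    schedValidFrom I c ((List.finRange n).map f) := by
  induction n generalizing Inv c with
  | zero => trivial
  | succ n ih =>
    rw [List.finRange_succ, List.map_cons, List.map_map]
    obtain ⟨hvalid, hnext⟩ := hstep 0 c hc
    exact ⟨hvalid, ih (f ∘ Fin.succ) (fun k => Inv (k + 1)) (fun k => hstep k.succ) _ hnext⟩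

end Generic

section Cost

variable {ν : Type} {I : Inst ν}

theorem ssCost_eq_of_forall [Nonempty (Fin I.P)] {S : Superstep ν I.P} {a b c : ℝ}
    (hcomp : ∀ p, listCost I (S.comp p) = a) (hsave : ∀ p, ioCost I (S.save p) = b)
    (hload : ∀ p, ioCost I (S.load p) = c) :
    ssCost I S = a + b + c + I.L := by
  simp only [ssCost, hcomp, hsave, hload, ciSup_const]

theorem syncCost_cons (S : Superstep ν I.P) (sched : Schedule ν I.P) :
    syncCost I (S :: sched) = ssCost I S + syncCost I sched :=
  List.sum_cons

theorem syncCost_map_of_forall {α : Type} (l : List α) (f : α → Superstep ν I.P) {C : ℝ}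
    (hf : ∀ a, ssCost I (f a) = C) :
    syncCost I (l.map f) = l.length * C := by
  simp [syncCost, Function.comp_def, hf]

end Cost

section Zipper

variable {d m : ℕ} {r g L : ℝ}

def sourcesOf : Fin 2 → Finset (ZNode d m) := ![univ.image .h1, univ.image .h2]

-- Processor `p` holds `H_{p+1}`; with 0-based levels `H₁` feeds `u k` exactly for even `k`.
def computedBy (p : Fin 2) (k : Fin m) : ZNode d m :=
  if Even ((k : ℕ) + p) then .u k else .v k

def loadedBy (p : Fin 2) (k : Fin m) : ZNode d m :=
  if Even ((k : ℕ) + p) then .v k else .u k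

theorem card_sourcesOf (p : Fin 2) : (sourcesOf p : Finset (ZNode d m)).card = d := by
  fin_cases p <;>
    exact (card_image_of_injective _ (fun _ _ h => by injection h)).trans (card_fin d)

theorem isSource_of_mem_sourcesOf {p : Fin 2} {x : ZNode d m} (hx : x ∈ sourcesOf p) :
    isSource (zipper d m r g L) x := by
  rintro ⟨y, hy⟩
  fin_cases p <;> obtain ⟨i, -, rfl⟩ := mem_image.mp hx <;> cases y <;> exact hy

theorem exists_computedBy_eq {x : ZNode d m} (hx : ¬ isSource (zipper d m r g L) x) :
    ∃ p k, computedBy p k = x := by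
  cases x with
  | h1 i => exact absurd (fun ⟨y, hy⟩ => by cases y <;> exact hy) hx
  | h2 i => exact absurd (fun ⟨y, hy⟩ => by cases y <;> exact hy) hx
  | v k =>
    by_cases hk : Even (k : ℕ)
    · exact ⟨1, k, by simp [computedBy, Nat.even_add_one, hk]⟩
    · exact ⟨0, k, by simp [computedBy, hk]⟩
  | u k =>
    by_cases hk : Even (k : ℕ)
    · exact ⟨0, k, by simp [computedBy, hk]⟩
    · exact ⟨1, k, by simp [computedBy, Nat.even_add_one, hk]⟩

theorem exists_computedBy_eq_loadedBy (p : Fin 2) (k : Fin m) :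
    ∃ q, computedBy q k = (loadedBy p k : ZNode d m) := by
  fin_cases p
  · exact ⟨1, by by_cases hk : Even (k : ℕ) <;> simp [computedBy, loadedBy, Nat.even_add_one, hk]⟩
  · exact ⟨0, by by_cases hk : Even (k : ℕ) <;> simp [computedBy, loadedBy, Nat.even_add_one, hk]⟩

theorem exists_zEdge_computedBy (hd : 0 < d) (p : Fin 2) (k : Fin m) :
    ∃ x, zEdge d m x (computedBy p k) := by
  fin_cases p
  · refine ⟨.h1 ⟨0, hd⟩, ?_⟩
    by_cases hk : Even (k : ℕ) <;> simp [computedBy, zEdge, Nat.even_add_one, hk]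
  · refine ⟨.h2 ⟨0, hd⟩, ?_⟩
    by_cases hk : Even (k : ℕ) <;> simp [computedBy, zEdge, Nat.even_add_one, hk]

theorem mem_sourcesOf_or_of_zEdge_computedBy {p : Fin 2} {k : Fin m} {x : ZNode d m}
    (h : zEdge d m x (computedBy p k)) :
    x ∈ sourcesOf p ∨ ∃ j : Fin m, (j : ℕ) + 1 = k ∧ x = loadedBy p j := by
  fin_cases p <;> unfold computedBy at h <;> split_ifs at h with hk <;> cases x <;>
    simp only [zEdge, Nat.even_iff, Nat.odd_iff] at h hk
  all_goals first
    | exact h.elim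
    | (exfalso; omega)
    | (right; refine ⟨_, h.symm, ?_⟩; unfold loadedBy
       split_ifs with hj <;> first | rfl | (exfalso; simp [Nat.even_iff] at hj; omega))
    | (left; simp [sourcesOf])

theorem memOK_zipper_of_card_le {R : Finset (ZNode d m)} {n : ℕ} (hR : R.card ≤ n)
    (hn : (n : ℝ) ≤ r) : memOK (zipper d m r g L) R := by
  simp only [memOK, zipper, sum_const, nsmul_eq_mul, mul_one]
  exact le_trans (by exact_mod_cast hR) hn

theorem ioCost_zipper (l : List (ZNode d m)) :
    ioCost (zipper d m r g L) l = l.length * g := by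
  simp [ioCost, zipper]

theorem listCost_zipper_compute (x : ZNode d m) :
    listCost (zipper d m r g L) [Op.compute x] = 1 := by
  simp [listCost, opCost, zipper]

noncomputable def loadSources : Superstep (ZNode d m) 2 where
  comp _ := []
  save _ := []
  del _ := []
  load p := (sourcesOf p).toList

noncomputable def levelStep (k : Fin m) : Superstep (ZNode d m) 2 where
  comp p := [.compute (computedBy p k)]
  save p := [computedBy p k]
  del p := (sourcesOf p)ᶜ.toList
  load p := [loadedBy p k]

def ReadyFor (k : ℕ) (c : Config (ZNode d m) 2) : Prop :=
  ∀ p, sourcesOf p ⊆ c.R p ∧ (c.R p).card ≤ d + 1 ∧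
    ∀ j : Fin m, (j : ℕ) + 1 = k → loadedBy p j ∈ c.R p

theorem afterLoad_levelStep {c : Config (ZNode d m) 2} {k : Fin m} {p : Fin 2}
    (hR : sourcesOf p ⊆ c.R p) :
    afterLoad c (levelStep k) p = insert (loadedBy p k) (sourcesOf p) := by
  rw [afterLoad, afterDel_eq_sdiff]
  change insert (computedBy p k) (c.R p) \ (sourcesOf p)ᶜ.toList.toFinset ∪
    [loadedBy p k].toFinset = _
  rw [toList_toFinset, sdiff_compl, inf_eq_right.mpr (hR.trans (subset_insert _ _)),
    union_comm, List.toFinset_cons, List.toFinset_nil, insert_empty, ← insert_eq]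

theorem levelStep_valid (hd : 0 < d) (hr : (d : ℝ) + 2 ≤ r) {k : Fin m}
    {c : Config (ZNode d m) 2} (hc : ReadyFor k c) :
    ssValid (zipper d m r g L) c (levelStep k) ∧
      ReadyFor (k + 1) (stepConfig c (levelStep k)) := by
  have hload : ∀ p, afterLoad c (levelStep k) p = insert (loadedBy p k) (sourcesOf p) :=
    fun p => afterLoad_levelStep (hc p).1
  have hcard : ∀ p, (insert (loadedBy p k) (sourcesOf p)).card ≤ d + 1 := fun p =>
    (card_insert_le _ _).trans (by rw [card_sourcesOf])
  refine ⟨⟨fun p op hop => ?_, fun (p : Fin 2) => ⟨?_, ?_, trivial⟩, fun p v hv => ?_,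
    fun (p : Fin 2) v hv => ?_, fun (p : Fin 2) => ?_⟩, fun p => ?_⟩
  · exact Or.inl ⟨_, List.mem_singleton.mp hop⟩
  · refine ⟨exists_zEdge_computedBy hd p k, fun x hx => ?_⟩
    rcases mem_sourcesOf_or_of_zEdge_computedBy hx with hx | ⟨j, hj, rfl⟩
    · exact (hc p).1 hx
    · exact (hc p).2.2 j hj
  · exact memOK_zipper_of_card_le ((card_insert_le _ _).trans (Nat.succ_le_succ (hc p).2.1))
      (by push_cast; linarith)
  · rw [List.mem_singleton.mp hv]
    exact mem_insert_self _ _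
  · obtain ⟨q, hq⟩ := exists_computedBy_eq_loadedBy (d := d) p k
    rw [List.mem_singleton.mp hv, ← hq]
    exact mem_newB_of_mem_save (p := q) (List.mem_singleton_self _)
  · change memOK _ (afterLoad (P := 2) c (levelStep k) p)
    rw [hload]
    exact memOK_zipper_of_card_le (hcard p) (by push_cast; linarith)
  · refine ⟨?_, ?_, fun j hj => ?_⟩ <;> simp only [stepConfig, hload]
    · exact subset_insert _ _
    · exact hcard p
    · rw [Fin.ext (Nat.succ_injective hj)]
      exact mem_insert_self _ _

theorem afterLoad_loadSources (B : Finset (ZNode d m)) (p : Fin 2) :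
    afterLoad ⟨fun _ => ∅, B⟩ loadSources p = sourcesOf p := by
  simp [afterLoad, afterDel, afterComp, run, loadSources]

theorem loadSources_valid (hr : (d : ℝ) ≤ r) {B : Finset (ZNode d m)}
    (hB : ∀ x, isSource (zipper d m r g L) x → x ∈ B) :
    ssValid (zipper d m r g L) ⟨fun _ => ∅, B⟩ loadSources ∧
      ReadyFor 0 (stepConfig ⟨fun _ => ∅, B⟩ loadSources) := by
  refine ⟨⟨fun _ _ h => by simp [loadSources] at h, fun _ => trivial,
    fun _ _ h => by simp [loadSources] at h, fun (p : Fin 2) x hx => ?_,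
    fun (p : Fin 2) => ?_⟩, fun p => ?_⟩
  · exact mem_union_left _ (hB x (isSource_of_mem_sourcesOf (mem_toList.mp hx)))
  · change memOK _ (afterLoad (P := 2) ⟨fun _ => ∅, B⟩ loadSources p)
    rw [afterLoad_loadSources]
    exact memOK_zipper_of_card_le (card_sourcesOf p).le hr
  · simp only [stepConfig, afterLoad_loadSources, card_sourcesOf]
    exact ⟨subset_rfl, by omega, fun j hj => by omega⟩

instance : Nonempty (Fin (zipper d m r g L).P) := ⟨(0 : Fin 2)⟩

theorem ssCost_loadSources :
    ssCost (zipper d m r g L) loadSources = 0 + 0 + d * g + L :=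
  ssCost_eq_of_forall (fun _ => rfl) (fun _ => rfl)
    (fun p => by rw [ioCost_zipper, show (loadSources.load p).length = d from
      (length_toList _).trans (card_sourcesOf p)])

theorem ssCost_levelStep (k : Fin m) :
    ssCost (zipper d m r g L) (levelStep k) = 1 + g + g + L :=
  ssCost_eq_of_forall (fun _ => listCost_zipper_compute _)
    (fun _ => by simp [ioCost_zipper, levelStep]) (fun _ => by simp [ioCost_zipper, levelStep])

end Zipper

theorem statement_2_general (d m : ℕ) (hd : 2 ≤ d) (g L : ℝ)
    (hg : 0 ≤ g) :
    ∃ sched : Schedule (ZNode d m) 2,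
      Valid (zipper d m ((d : ℝ) + 2) g L) sched ∧
      syncCost (zipper d m ((d : ℝ) + 2) g L) sched ≤
        (m : ℝ) + (2 * (m : ℝ) + 2 * (d : ℝ)) * g + ((m : ℝ) + 1) * L := by
  classical
  let B₀ : Finset (ZNode d m) := univ.filter (isSource (zipper d m ((d : ℝ) + 2) g L))
  have hB₀ : ∀ x, isSource (zipper d m ((d : ℝ) + 2) g L) x → x ∈ B₀ :=
    fun x hx => mem_filter.mpr ⟨mem_univ x, hx⟩
  obtain ⟨hvalid₀, hready⟩ := loadSources_valid (by linarith) hB₀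
  refine ⟨loadSources :: (List.finRange m).map levelStep,
    ⟨B₀, fun x => ?_, ⟨hvalid₀, ?_⟩, fun x _ => ?_⟩, ?_⟩
  · simp [B₀]
  · exact schedValidFrom_map_finRange _ ReadyFor
      (fun k c hc => levelStep_valid (by omega) le_rfl hc) _ hready
  · by_cases hx : isSource (zipper d m ((d : ℝ) + 2) g L) x
    · exact B_subset_runSched_B _ _ (hB₀ x hx)
    · obtain ⟨p, k, rfl⟩ := exists_computedBy_eq hx
      exact mem_runSched_B_of_mem_save (p := p)
        (List.mem_cons_of_mem _ (List.mem_map_of_mem (List.mem_finRange k)))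
        (List.mem_singleton_self _)
  · calc syncCost _ _
        = ssCost (zipper d m ((d : ℝ) + 2) g L) loadSources +
            (List.finRange m).length * (1 + g + g + L) :=
          (syncCost_cons _ _).trans (congrArg _ (syncCost_map_of_forall _ _ ssCost_levelStep))
      _ ≤ _ := by
        rw [ssCost_loadSources, List.length_finRange]
        linarith [mul_nonneg (Nat.cast_nonneg d : (0 : ℝ) ≤ d) hg]

/-- For `d, m ≥ 2`, `g, L ≥ 0`, the zipper DAG `Z(d,m)` with `P = 2`
and `r = d+2` admits a valid schedule of synchronous cost at most
`m + (2m + 2d)·g + (m+1)·L`. -/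
theorem statement_2 (d m : ℕ) (hd : 2 ≤ d) (hm : 2 ≤ m) (g L : ℝ)
    (hg : 0 ≤ g) (hL : 0 ≤ L) :
    ∃ sched : Schedule (ZNode d m) 2,
      Valid (zipper d m ((d : ℝ) + 2) g L) sched ∧
      syncCost (zipper d m ((d : ℝ) + 2) g L) sched ≤
        (m : ℝ) + (2 * (m : ℝ) + 2 * (d : ℝ)) * g + ((m : ℝ) + 1) * L :=
  statement_2_general d m hd g L hg

end MBSP
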